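/- Let a, b ∈ SL(2,ℂ) with tr(a) = tr(b) = t ≠ 0, and suppose a·b = -p where p = [[1,1],[0,1]]. Then there exists α ∈ ℂ such that a = k(α) and b = k(α - t), where k(α) = [[α + t/2, (t²/4 - 1 - α²)/(2t)], [2t, -α + t/2]]. -/
import Mathlib


open Matrix

noncomputable def kMat (t α : ℂ) : Matrix (Fin 2) (Fin 2) ℂ :=
  !![α + t / 2, (t ^ 2 / 4 - 1 - α ^ 2) / (2 * t); 2 * t, -α + t / 2]

theorem product_neg_parabolic (a b : Matrix (Fin 2) (Fin 2) ℂ) (t : ℂ)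
    (ht : t ≠ 0)
    (ha : a.det = 1) (hb : b.det = 1) (hta : a.trace = t) (htb : b.trace = t)
    (hab : a * b = -!![1, 1; 0, 1]) :
    ∃ α : ℂ, a = kMat t α ∧ b = kMat t (α - t) := by
  have h2t : (2 : ℂ) * t ≠ 0 := by simpa using ht
  have hdet : a 0 0 * a 1 1 - a 0 1 * a 1 0 = 1 := by
    simpa [Matrix.det_fin_two] using ha
  have htr : a 0 0 + a 1 1 = t := by simpa [Matrix.trace_fin_two] using hta
  have hinv : !![a 1 1, -(a 0 1); -(a 1 0), a 0 0] * a = 1 := by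
    ext i j
    fin_cases i <;> fin_cases j <;>
      simp [Matrix.mul_apply, Fin.sum_univ_two, Matrix.one_apply] <;>
      first
        | linear_combination hdet
        | linear_combination -hdet
        | ring
  have hb' : b = !![a 1 1, -(a 0 1); -(a 1 0), a 0 0] * (a * b) := by
    rw [← Matrix.mul_assoc, hinv, Matrix.one_mul]
  rw [hab] at hb'
  have hb2 : b = !![-(a 1 1), a 0 1 - a 1 1; a 1 0, a 1 0 - a 0 0] := by
    rw [hb']
    ext i j
    fin_cases i <;> fin_cases j <;>
      simp [Matrix.mul_apply, Fin.sum_univ_two] <;> ring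
  have htrb : -(a 1 1) + (a 1 0 - a 0 0) = t := by
    have := htb
    rw [hb2] at this
    simpa [Matrix.trace_fin_two] using this
  have h10 : a 1 0 = 2 * t := by linear_combination htrb + htr
  refine ⟨a 0 0 - t / 2, ?_, ?_⟩
  · ext i j
    fin_cases i <;> fin_cases j <;>
      simp only [kMat, Fin.mk_zero, Fin.mk_one, Matrix.of_apply, Matrix.cons_val', Matrix.cons_val_zero,
        Matrix.cons_val_one, Matrix.head_cons, Matrix.head_fin_const, Matrix.empty_val',
        Matrix.cons_val_fin_one, Fin.isValue]
    · ring
    · rw [eq_div_iff h2t]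
      linear_combination -hdet - a 0 1 * h10 + a 0 0 * htr
    · exact h10
    · linear_combination htr
  · rw [hb2]
    ext i j
    fin_cases i <;> fin_cases j <;>
      simp only [kMat, Fin.mk_zero, Fin.mk_one, Matrix.of_apply, Matrix.cons_val', Matrix.cons_val_zero,
        Matrix.cons_val_one, Matrix.head_cons, Matrix.head_fin_const, Matrix.empty_val',
        Matrix.cons_val_fin_one, Fin.isValue]
    · linear_combination -htr
    · rw [eq_div_iff h2t]
      linear_combination -hdet - a 0 1 * h10 + (a 0 0 - 2 * t) * htr
    · exact h10
    · linear_combination h10
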